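/- arXiv:1604.04037 — 6 statements merged into one kernel-verified Lean document; each statement's English description precedes it below -/
import Mathlib

section
/- For every basis element σ ∈ S, ∂σ lies in the F-linear span of S (no basis elements U^m σ' with m ≠ 0 occur in ∂σ). Equivalently, the F-subspace C_model := span_F(S) of C∞ is a subcomplex of (C∞, ∂). (This is Lemma 4.3 of the paper, which isolates the U⁰-part of the full knot Floer complex of the (n,1)-cable of the trefoil as a direct summand.) -/
/-- The labels of the `F[U,U⁻¹]`-basis `S` of `CFK^∞(T_{2,3;n,1})`. -/
inductive Gen : Type
  | x (k : ℕ) | x' (k : ℕ) | y (k : ℕ) | y' (k : ℕ) | z (k : ℕ) | w (k : ℕ)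
  deriving DecidableEq

/-- The validity predicate carving out the basis set `S` for a given `n`:
`S = {y_n, x_n, y'_1} ∪ {x'_k, y'_k : 2 ≤ k ≤ n} ∪ {x_k, z_k : 2 ≤ k ≤ n−1} ∪ {y_k, w_k : 1 ≤ k ≤ n−1}`,
where we encode `x_n` as `.x n`, `y_n` as `.y n` and `y'_1` as `.y' 1`. -/
def Gen.Valid (n : ℕ) : Gen → Prop
  | .x k => 2 ≤ k ∧ k ≤ n
  | .x' k => 2 ≤ k ∧ k ≤ n
  | .y k => 1 ≤ k ∧ k ≤ n
  | .y' k => 1 ≤ k ∧ k ≤ n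
  | .z k => 2 ≤ k ∧ k ≤ n - 1
  | .w k => 1 ≤ k ∧ k ≤ n - 1

/-- The algebraic filtration `A₁` on `S`. -/
def Gen.A1 : Gen → ℤ
  | .x _ => 1
  | .x' k => (k : ℤ)
  | .y _ => 0
  | .y' k => (k : ℤ)
  | .z _ => 1
  | .w _ => 0

/-- The Alexander filtration `A₂` on `S`. -/
def Gen.A2 : Gen → ℤ
  | .x k => (k : ℤ)
  | .x' _ => 1
  | .y k => (k : ℤ)
  | .y' _ => 0
  | .z _ => 1
  | .w _ => 0

/-- The Maslov grading `M` on `S`. -/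
def Gen.M : Gen → ℤ
  | .x _ => 1
  | .x' _ => 1
  | .y _ => 0
  | .y' _ => 0
  | .z _ => 0
  | .w _ => -1

/-- The vertical differential `∂_V` on the basis `S`:
`∂_V x_n = y'_1`, `∂_V x_k = z_k` (`2 ≤ k ≤ n−1`), `∂_V x'_k = y'_k` (`2 ≤ k ≤ n`),
`∂_V y_k = w_k` (`1 ≤ k ≤ n−1`), and `∂_V σ = 0` otherwise. -/
def Gen.dV (n : ℕ) : Gen → Option Gen
  | .x k => if k = n then some (.y' 1) else some (.z k)
  | .x' k => some (.y' k)
  | .y k => if k = n then none else some (.w k)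
  | _ => none

/-- The basis set `S`. -/
abbrev SGen (n : ℕ) := {g : Gen // g.Valid n}

/-- `C^∞` as an `F = ℤ/2`-vector space with basis `{U^m σ : m ∈ ℤ, σ ∈ S}`;
the pair `(m, σ)` encodes the basis vector `U^m σ`, whose bifiltration is
`(A₁ σ − m, A₂ σ − m)` and whose Maslov grading is `M σ − 2m`.  (The value of a
finitely supported function at `(m, σ)` is the coefficient of `U^m σ`.) -/
abbrev Cinf (n : ℕ) := (ℤ × SGen n) →₀ ZMod 2

/-- The basis vector `U^m σ` of `C^∞`. -/
noncomputable def gen (n : ℕ) (m : ℤ) (σ : SGen n) : Cinf n :=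
  Finsupp.single (m, σ) 1

/-!
The Maslov grading (which takes values in `{-1, 0, 1}` on `S`) only allows a component
`U^{m'} σ'` of `∂σ` with `m' ≠ 0` when `m' = 1`, and the filtration then forces `σ` to be a
vertical boundary `σ = ∂_V χ` with `A₁ χ = A₁ σ`. Expand the coefficient of `U σ'` in
`∂∂χ = 0`: the term through `σ` is the coefficient we want, while every other component of
`∂χ` lies in `U⁰` and, being off the vertical part, has smaller `A₁` than `σ`, so its
contribution vanishes by induction on `A₁`.
-/

theorem Gen.dV_eq_none_of_dV_eq_some {n : ℕ} {g h : Gen} (hgh : g.dV n = some h) :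
    h.dV n = none := by
  cases g <;> grind [Gen.dV]

theorem Gen.A1_nonneg (g : Gen) : 0 ≤ g.A1 := by
  cases g <;> simp [Gen.A1]

theorem Gen.M_mem_Icc (g : Gen) : g.M ∈ Set.Icc (-1) 1 := by
  cases g <;> simp [Gen.M]

/-- The hypotheses are what Maslov grading and filtration allow for a non-vertical
component `U g'` of `∂g`. -/
theorem Gen.exists_dV_eq_some {n : ℕ} {g g' : Gen} (hg : g.Valid n) (hg' : g'.Valid n)
    (hM : g'.M = g.M + 1) (hA₁ : g'.A1 - 1 < g.A1) (hA₂ : g'.A2 - 1 ≤ g.A2) :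
    ∃ χ : Gen, χ.Valid n ∧ χ.dV n = some g ∧ χ.A1 = g.A1 := by
  cases g with
  | z k =>
    obtain ⟨hk₂, hkn⟩ := hg
    exact ⟨.x k, ⟨hk₂, by omega⟩, by simp [Gen.dV]; omega, rfl⟩
  | w k =>
    obtain ⟨hk₁, hkn⟩ := hg
    exact ⟨.y k, ⟨hk₁, by omega⟩, by simp [Gen.dV]; omega, rfl⟩
  | y' k =>
    refine ⟨.x' k, ⟨?_, hg.2⟩, rfl, rfl⟩
    cases g' <;> simp_all [Gen.M, Gen.A1, Gen.A2, Gen.Valid] <;> omega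
  | _ => cases g' <;> simp_all [Gen.M, Gen.A1, Gen.A2, Gen.Valid]

theorem Finsupp.apply_single_eq_zero_of_comp_self_eq_zero {α R : Type*} [Semiring R]
    (d : (α →₀ R) →ₗ[R] α →₀ R) (hdd : ∀ v, d (d v) = 0) {a b q : α}
    (hb : d (single a 1) b = 1)
    (hrest : ∀ p ≠ b, d (single a 1) p ≠ 0 → d (single p 1) q = 0) :
    d (single b 1) q = 0 := by
  have expand : ∀ v : α →₀ R, d v q = ∑ p ∈ v.support, v p * d (single p 1) q := by
    intro v
    conv_lhs => rw [← v.sum_single]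
    simp only [Finsupp.sum, map_sum, Finsupp.finsetSum_apply]
    refine Finset.sum_congr rfl fun p _ => ?_
    rw [← smul_single_one, map_smul, Finsupp.smul_apply, smul_eq_mul]
  have h := expand (d (single a 1))
  rw [hdd, Finsupp.coe_zero, Pi.zero_apply, Finset.sum_eq_single b] at h
  · rw [hb, one_mul] at h
    exact h.symm
  · intro p _ hpb
    by_cases hp : d (single a 1) p = 0
    · rw [hp, zero_mul]
    · rw [hrest p hpb hp, mul_zero]
  · intro hb'
    rw [Finsupp.notMem_support_iff.1 hb', zero_mul]

section

variable {n : ℕ}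

/-! Conditions (ii)–(iv), read off on the components of `∂σ` for `σ ∈ S`. -/

def LowersMaslovByOne (d : Cinf n →ₗ[ZMod 2] Cinf n) : Prop :=
  ∀ (σ : SGen n) (m' : ℤ) (σ' : SGen n),
    d (gen n 0 σ) (m', σ') ≠ 0 → σ'.1.M - 2 * m' = σ.1.M - 1

def IsBifiltered (d : Cinf n →ₗ[ZMod 2] Cinf n) : Prop :=
  ∀ (σ : SGen n) (m' : ℤ) (σ' : SGen n),
    d (gen n 0 σ) (m', σ') ≠ 0 → σ'.1.A1 - m' ≤ σ.1.A1 ∧ σ'.1.A2 - m' ≤ σ.1.A2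

def VerticalPartEqDV (d : Cinf n →ₗ[ZMod 2] Cinf n) : Prop :=
  ∀ (σ : SGen n) (m' : ℤ) (σ' : SGen n), σ'.1.A1 - m' = σ.1.A1 →
    d (gen n 0 σ) (m', σ') = if σ.1.dV n = some σ'.1 ∧ m' = 0 then 1 else 0

variable {d : Cinf n →ₗ[ZMod 2] Cinf n}

theorem VerticalPartEqDV.apply_eq_zero (hV : VerticalPartEqDV d) {σ σ' : SGen n} {m' : ℤ}
    (hA₁ : σ'.1.A1 - m' = σ.1.A1) (hne : σ.1.dV n = some σ'.1 → m' ≠ 0) :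
    d (gen n 0 σ) (m', σ') = 0 := by
  rw [hV σ m' σ' hA₁, if_neg (fun h => hne h.1 h.2)]

theorem exists_dV_eq_some_of_apply_ne_zero (hM : LowersMaslovByOne d) (hF : IsBifiltered d)
    (hV : VerticalPartEqDV d) {σ σ' : SGen n} {m' : ℤ} (h : d (gen n 0 σ) (m', σ') ≠ 0)
    (hm' : m' ≠ 0) : m' = 1 ∧ ∃ χ : SGen n, χ.1.dV n = some σ.1 ∧ χ.1.A1 = σ.1.A1 := by
  have hMσ := hM σ m' σ' h
  obtain ⟨hA₁, hA₂⟩ := hF σ m' σ' h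
  have hA₁' : σ'.1.A1 - m' ≠ σ.1.A1 := fun he => h (hV.apply_eq_zero he fun _ => hm')
  have := σ.1.M_mem_Icc
  have := σ'.1.M_mem_Icc
  obtain rfl : m' = 1 := by simp only [Set.mem_Icc] at *; omega
  obtain ⟨χ, hχ, hdV, hA⟩ := Gen.exists_dV_eq_some σ.2 σ'.2 (by omega) (by omega) hA₂
  exact ⟨rfl, ⟨χ, hχ⟩, hdV, hA⟩

theorem eq_zero_of_apply_gen_ne_zero_of_dV_eq_some (hM : LowersMaslovByOne d)
    (hF : IsBifiltered d) (hV : VerticalPartEqDV d) {χ σ τ : SGen n} {m' : ℤ}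
    (hχ : χ.1.dV n = some σ.1) (h : d (gen n 0 χ) (m', τ) ≠ 0) : m' = 0 := by
  by_contra hm'
  obtain ⟨-, ψ, hψ, -⟩ := exists_dV_eq_some_of_apply_ne_zero hM hF hV h hm'
  simp [Gen.dV_eq_none_of_dV_eq_some hψ] at hχ

theorem apply_gen_zero_one_eq_zero (hdd : ∀ v, d (d v) = 0) (hM : LowersMaslovByOne d)
    (hF : IsBifiltered d) (hV : VerticalPartEqDV d) (σ σ' : SGen n) :
    d (gen n 0 σ) (1, σ') = 0 := by
  induction hk : σ.1.A1.toNat using Nat.strong_induction_on generalizing σ with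
  | _ k ih =>
  by_contra h
  obtain ⟨-, χ, hχ, hA⟩ := exists_dV_eq_some_of_apply_ne_zero hM hF hV h one_ne_zero
  have hχσ : d (gen n 0 χ) (0, σ) = 1 := by
    rw [hV χ 0 σ (by rw [sub_zero, hA]), if_pos ⟨hχ, rfl⟩]
  refine h (Finsupp.apply_single_eq_zero_of_comp_self_eq_zero d hdd hχσ ?_)
  rintro ⟨m'', τ⟩ hτσ hτ
  obtain rfl := eq_zero_of_apply_gen_ne_zero_of_dV_eq_some hM hF hV hχ hτ
  have hA₁ : τ.1.A1 < χ.1.A1 := by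
    refine lt_of_le_of_ne (by simpa using (hF χ 0 τ hτ).1) fun he => hτ ?_
    refine hV.apply_eq_zero (by rw [sub_zero, he]) fun hχτ => absurd ?_ hτσ
    rw [hχ, Option.some_inj] at hχτ
    rw [Subtype.ext hχτ]
  have := τ.1.A1_nonneg
  exact ih _ (by omega) τ rfl

end

theorem statement_0_general (n : ℕ)
    (d : Cinf n →ₗ[ZMod 2] Cinf n)
    -- (i) ∂ ∘ ∂ = 0
    (hdd : ∀ v, d (d v) = 0)
    -- (ii) ∂ is homogeneous of Maslov degree −1
    (hM : ∀ (m : ℤ) (σ : SGen n) (m' : ℤ) (σ' : SGen n),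
      d (gen n m σ) (m', σ') ≠ 0 → σ'.1.M - 2 * m' = σ.1.M - 2 * m - 1)
    -- (iii) ∂ strictly drops the bifiltration
    (hF : ∀ (m : ℤ) (σ : SGen n) (m' : ℤ) (σ' : SGen n),
      d (gen n m σ) (m', σ') ≠ 0 →
        σ'.1.A1 - m' ≤ σ.1.A1 - m ∧ σ'.1.A2 - m' ≤ σ.1.A2 - m ∧
          ¬(σ'.1.A1 - m' = σ.1.A1 - m ∧ σ'.1.A2 - m' = σ.1.A2 - m))
    -- (iv) the vertical components of ∂ (equal algebraic filtration) are exactly ∂_V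
    (hV : ∀ (σ : SGen n) (m' : ℤ) (σ' : SGen n),
      σ'.1.A1 - m' = σ.1.A1 →
        d (gen n 0 σ) (m', σ') = if σ.1.dV n = some σ'.1 ∧ m' = 0 then 1 else 0) :
    -- ∂ of every basis element of S lies in the F-linear span of S:
    -- no basis element U^{m'} σ' with m' ≠ 0 occurs in ∂σ
    ∀ (σ : SGen n) (m' : ℤ) (σ' : SGen n), m' ≠ 0 → d (gen n 0 σ) (m', σ') = 0 := by
  have hM₀ : LowersMaslovByOne d := fun σ m' σ' h => by simpa using hM 0 σ m' σ' h
  have hF₀ : IsBifiltered d := fun σ m' σ' h => by simpa using (hF 0 σ m' σ' h).imp_right And.left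
  intro σ m' σ' hm'
  by_contra h
  obtain ⟨rfl, -⟩ := exists_dV_eq_some_of_apply_ne_zero hM₀ hF₀ hV h hm'
  exact h (apply_gen_zero_one_eq_zero hdd hM₀ hF₀ hV σ σ')

theorem statement_0 (n : ℕ) (hn : 2 ≤ n)
    (d : Cinf n →ₗ[ZMod 2] Cinf n)
    -- (i) ∂ ∘ ∂ = 0
    (hdd : ∀ v, d (d v) = 0)
    -- F[U,U⁻¹]-linearity: ∂ commutes with multiplication by U (the shift (m,σ) ↦ (m+1,σ))
    (hU : ∀ (m : ℤ) (σ : SGen n) (m' : ℤ) (σ' : SGen n),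
      d (gen n m σ) (m', σ') = d (gen n (m + 1) σ) (m' + 1, σ'))
    -- (ii) ∂ is homogeneous of Maslov degree −1
    (hM : ∀ (m : ℤ) (σ : SGen n) (m' : ℤ) (σ' : SGen n),
      d (gen n m σ) (m', σ') ≠ 0 → σ'.1.M - 2 * m' = σ.1.M - 2 * m - 1)
    -- (iii) ∂ strictly drops the bifiltration
    (hF : ∀ (m : ℤ) (σ : SGen n) (m' : ℤ) (σ' : SGen n),
      d (gen n m σ) (m', σ') ≠ 0 →
        σ'.1.A1 - m' ≤ σ.1.A1 - m ∧ σ'.1.A2 - m' ≤ σ.1.A2 - m ∧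
          ¬(σ'.1.A1 - m' = σ.1.A1 - m ∧ σ'.1.A2 - m' = σ.1.A2 - m))
    -- (iv) the vertical components of ∂ (equal algebraic filtration) are exactly ∂_V
    (hV : ∀ (σ : SGen n) (m' : ℤ) (σ' : SGen n),
      σ'.1.A1 - m' = σ.1.A1 →
        d (gen n 0 σ) (m', σ') = if σ.1.dV n = some σ'.1 ∧ m' = 0 then 1 else 0) :
    -- ∂ of every basis element of S lies in the F-linear span of S:
    -- no basis element U^{m'} σ' with m' ≠ 0 occurs in ∂σ
    ∀ (σ : SGen n) (m' : ℤ) (σ' : SGen n), m' ≠ 0 → d (gen n 0 σ) (m', σ') = 0 :=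
  statement_0_general n d hdd hM hF hV
end

section
/- For every k with 1 ≤ k ≤ n−1 one has ∂y_k = w_k exactly (the full differential of y_k equals its vertical differential, with no diagonal or horizontal components), and consequently ∂w_k = 0 for every 1 ≤ k ≤ n−1. (This is the first step in the proof of Lemma 4.3 of the paper.) -/
theorem statement_1 (n : ℕ) (hn : 2 ≤ n)
    (d : Cinf n →ₗ[ZMod 2] Cinf n)
    -- (i) ∂ ∘ ∂ = 0
    (hdd : ∀ v, d (d v) = 0)
    -- F[U,U⁻¹]-linearity: ∂ commutes with multiplication by U (the shift (m,σ) ↦ (m+1,σ))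
    (hU : ∀ (m : ℤ) (σ : SGen n) (m' : ℤ) (σ' : SGen n),
      d (gen n m σ) (m', σ') = d (gen n (m + 1) σ) (m' + 1, σ'))
    -- (ii) ∂ is homogeneous of Maslov degree −1
    (hM : ∀ (m : ℤ) (σ : SGen n) (m' : ℤ) (σ' : SGen n),
      d (gen n m σ) (m', σ') ≠ 0 → σ'.1.M - 2 * m' = σ.1.M - 2 * m - 1)
    -- (iii) ∂ strictly drops the bifiltration
    (hF : ∀ (m : ℤ) (σ : SGen n) (m' : ℤ) (σ' : SGen n),
      d (gen n m σ) (m', σ') ≠ 0 →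
        σ'.1.A1 - m' ≤ σ.1.A1 - m ∧ σ'.1.A2 - m' ≤ σ.1.A2 - m ∧
          ¬(σ'.1.A1 - m' = σ.1.A1 - m ∧ σ'.1.A2 - m' = σ.1.A2 - m))
    -- (iv) the vertical components of ∂ (equal algebraic filtration) are exactly ∂_V
    (hV : ∀ (σ : SGen n) (m' : ℤ) (σ' : SGen n),
      σ'.1.A1 - m' = σ.1.A1 →
        d (gen n 0 σ) (m', σ') = if σ.1.dV n = some σ'.1 ∧ m' = 0 then 1 else 0) :
    ∀ (k : ℕ) (h1 : 1 ≤ k) (h2 : k ≤ n - 1),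
      d (gen n 0 ⟨Gen.y k, h1, by omega⟩) = gen n 0 ⟨Gen.w k, h1, h2⟩ ∧
        d (gen n 0 ⟨Gen.w k, h1, h2⟩) = 0 := by
  intro k h1 h2
  have hkn : k ≠ n := by omega
  have hkv : (Gen.y k).Valid n := ⟨h1, by omega⟩
  have hwv : (Gen.w k).Valid n := ⟨h1, h2⟩
  have key : d (gen n 0 ⟨Gen.y k, hkv⟩) = gen n 0 ⟨Gen.w k, hwv⟩ := by
    ext p
    obtain ⟨m', σ'⟩ := p
    by_cases hvert : σ'.1.A1 - m' = (Gen.y k).A1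
    · rw [hV ⟨Gen.y k, hkv⟩ m' σ' hvert]
      have hdv : (Gen.y k).dV n = some (Gen.w k) := by simp [Gen.dV, hkn]
      rw [hdv]
      simp only [gen, Finsupp.single_apply, Option.some_inj]
      by_cases h : σ'.1 = Gen.w k ∧ m' = 0
      · obtain ⟨hs, hm⟩ := h
        have hσ : σ' = ⟨Gen.w k, hwv⟩ := Subtype.ext hs
        subst hσ; subst hm
        simp
      · rw [if_neg, if_neg]
        · intro he
          exact h ⟨(congrArg (fun q => (Prod.snd q : SGen n).1) he).symm,
            (congrArg Prod.fst he).symm⟩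
        · intro he
          exact h ⟨he.1.symm, he.2⟩
    · have hL : d (gen n 0 ⟨Gen.y k, hkv⟩) (m', σ') = 0 := by
        by_contra hz
        have hm := hM 0 ⟨Gen.y k, hkv⟩ m' σ' hz
        have hf := hF 0 ⟨Gen.y k, hkv⟩ m' σ' hz
        obtain ⟨σ'', hσ''⟩ := σ'
        rcases σ'' with j | j | j | j | j | j <;>
          simp [Gen.M, Gen.A1, Gen.A2, Gen.Valid] at hm hf hσ'' hvert <;> omega
      have hR : gen n 0 ⟨Gen.w k, hwv⟩ (m', σ') = 0 := by
        rw [gen, Finsupp.single_apply, if_neg]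
        intro he
        apply hvert
        cases he
        simp [Gen.A1]
      rw [hL, hR]
  refine ⟨key, ?_⟩
  have h0 := hdd (gen n 0 ⟨Gen.y k, hkv⟩)
  rw [key] at h0
  exact h0
end

section
/- For every k with 2 ≤ k ≤ n−1, the differential ∂z_k lies in the F-linear span of {w_1, …, w_{n−1}}; in particular the coefficient of U·x_2 in ∂z_k vanishes. (This is the step 'ε_k = 0' in the proof of Lemma 4.3 of the paper.) -/
theorem statement_2 (n : ℕ) (hn : 2 ≤ n)
    (d : Cinf n →ₗ[ZMod 2] Cinf n)
    -- (i) ∂ ∘ ∂ = 0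
    (hdd : ∀ v, d (d v) = 0)
    -- F[U,U⁻¹]-linearity: ∂ commutes with multiplication by U (the shift (m,σ) ↦ (m+1,σ))
    (hU : ∀ (m : ℤ) (σ : SGen n) (m' : ℤ) (σ' : SGen n),
      d (gen n m σ) (m', σ') = d (gen n (m + 1) σ) (m' + 1, σ'))
    -- (ii) ∂ is homogeneous of Maslov degree −1
    (hM : ∀ (m : ℤ) (σ : SGen n) (m' : ℤ) (σ' : SGen n),
      d (gen n m σ) (m', σ') ≠ 0 → σ'.1.M - 2 * m' = σ.1.M - 2 * m - 1)
    -- (iii) ∂ strictly drops the bifiltration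
    (hF : ∀ (m : ℤ) (σ : SGen n) (m' : ℤ) (σ' : SGen n),
      d (gen n m σ) (m', σ') ≠ 0 →
        σ'.1.A1 - m' ≤ σ.1.A1 - m ∧ σ'.1.A2 - m' ≤ σ.1.A2 - m ∧
          ¬(σ'.1.A1 - m' = σ.1.A1 - m ∧ σ'.1.A2 - m' = σ.1.A2 - m))
    -- (iv) the vertical components of ∂ (equal algebraic filtration) are exactly ∂_V
    (hV : ∀ (σ : SGen n) (m' : ℤ) (σ' : SGen n),
      σ'.1.A1 - m' = σ.1.A1 →
        d (gen n 0 σ) (m', σ') = if σ.1.dV n = some σ'.1 ∧ m' = 0 then 1 else 0) :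
    ∀ (k : ℕ) (h1 : 2 ≤ k) (h2 : k ≤ n - 1),
      (∀ (m' : ℤ) (σ' : SGen n), d (gen n 0 ⟨Gen.z k, h1, h2⟩) (m', σ') ≠ 0 →
          m' = 0 ∧ ∃ l, σ'.1 = Gen.w l) ∧
        -- in particular the coefficient of U·x₂ in ∂z_k vanishes
        d (gen n 0 ⟨Gen.z k, h1, h2⟩) (1, ⟨Gen.x 2, le_rfl, hn⟩) = 0 := by
  intro k h1 h2
  have hn3 : 3 ≤ n := by omega
  have hz2v : (Gen.z 2).Valid n := ⟨le_rfl, by omega⟩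
  have hx2v : (Gen.x 2).Valid n := ⟨le_rfl, hn⟩
  set σz : SGen n := ⟨Gen.z k, h1, h2⟩ with hσz
  set z2 : SGen n := ⟨Gen.z 2, hz2v⟩ with hz2
  set x2 : SGen n := ⟨Gen.x 2, hx2v⟩ with hx2
  -- classification of possibly-nonzero coefficients of d z_k
  have hclass : ∀ (m' : ℤ) (σ' : SGen n), d (gen n 0 σz) (m', σ') ≠ 0 →
      (m' = 0 ∧ ∃ l, σ'.1 = Gen.w l) ∨ (m' = 1 ∧ σ' = x2) := by
    intro m' σ' hne
    have hm := hM 0 σz m' σ' hne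
    have hf := hF 0 σz m' σ' hne
    obtain ⟨σv, hσv⟩ := σ'
    cases σv with
    | x l =>
      right
      simp only [hσz, Gen.M] at hm
      have hm1 : m' = 1 := by omega
      have hl2 : l = 2 := by
        have h2' := hf.2.1
        simp only [hσz, Gen.A2] at h2'
        have := hσv.1
        omega
      subst hm1; subst hl2
      exact ⟨rfl, rfl⟩
    | x' l =>
      exfalso
      simp only [hσz, Gen.M] at hm
      have hm1 : m' = 1 := by omega
      have hl2 : l = 2 := by
        have h1' := hf.1
        simp only [hσz, Gen.A1] at h1'
        have := hσv.1
        omega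
      subst hm1; subst hl2
      have hvert : (⟨Gen.x' 2, hσv⟩ : SGen n).1.A1 - 1 = σz.1.A1 := by
        simp [hσz, Gen.A1]
      have := hV σz 1 ⟨Gen.x' 2, hσv⟩ hvert
      simp [hσz, Gen.dV] at this
      exact hne this
    | y l => exfalso; simp only [hσz, Gen.M] at hm; omega
    | y' l => exfalso; simp only [hσz, Gen.M] at hm; omega
    | z l => exfalso; simp only [hσz, Gen.M] at hm; omega
    | w l =>
      left
      simp only [hσz, Gen.M] at hm
      exact ⟨by omega, l, rfl⟩
  -- compute d(d z_k) at (1, z_2) to get the coefficient of U x_2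
  set f : Cinf n := d (gen n 0 σz) with hf
  have hterm : ∀ q ∈ f.support, f q * d (gen n q.1 q.2) (1, z2)
      = if q = ((1 : ℤ), x2) then f q else 0 := by
    intro q hq
    have hne : f (q.1, q.2) ≠ 0 := by
      rw [Finsupp.mem_support_iff] at hq
      simpa using hq
    rcases hclass q.1 q.2 hne with ⟨h0, l, hl⟩ | ⟨hm1, hσ⟩
    · have hq1 : q ≠ ((1 : ℤ), x2) := by
        intro h; rw [h] at h0; exact one_ne_zero h0
      rw [if_neg hq1]
      have hvert : z2.1.A1 - 1 = (q.2).1.A1 := by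
        simp [hz2, Gen.A1, hl]
      have hh := hV q.2 1 z2 hvert
      rw [h0, hh]
      simp [hl, Gen.dV, hz2]
    · have hq1 : q = ((1 : ℤ), x2) := by
        rw [← hm1, ← hσ]
      rw [if_pos hq1, hq1]
      have hvert : z2.1.A1 - 0 = x2.1.A1 := by simp [hz2, hx2, Gen.A1]
      have h01 := hV x2 0 z2 hvert
      have hdv : (Gen.x 2).dV n = some (Gen.z 2) := by
        simp only [Gen.dV]
        rw [if_neg (by omega : ¬ 2 = n)]
      rw [hz2, hx2] at h01
      simp only [hdv, hz2, hx2, and_true, if_pos rfl] at h01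
      have hshift := hU 0 x2 0 z2
      norm_num at hshift
      rw [hx2, hz2] at hshift
      rw [← hshift, h01]
      simp
  have heps : f (1, x2) = 0 := by
    have hrep : (f : Cinf n) = f.sum (fun q c => c • gen n q.1 q.2) := by
      conv_lhs => rw [← Finsupp.sum_single f]
      refine Finsupp.sum_congr (fun q _ => ?_)
      simp [gen, Finsupp.smul_single]
    have h0 : d f (1, z2) = 0 := by
      rw [hf, hdd (gen n 0 σz)]; rfl
    have hcalc : d f (1, z2) = f (1, x2) := by
      conv_lhs => rw [hrep, map_finsuppSum]
      rw [Finsupp.sum_apply]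
      have hcongr : (f.sum fun q c => (d (c • gen n q.1 q.2)) (1, z2))
          = ∑ q ∈ f.support, f q * d (gen n q.1 q.2) (1, z2) := by
        refine Finset.sum_congr rfl (fun q hq => ?_)
        simp only [map_smul, Finsupp.smul_apply, smul_eq_mul]
      rw [hcongr, Finset.sum_congr rfl hterm,
        Finset.sum_ite_eq' f.support ((1 : ℤ), x2) f]
      split
      · rfl
      · next h => exact (Finsupp.notMem_support_iff.mp h).symm
    rw [← hcalc, h0]
  constructor
  · intro m' σ' hne
    rcases hclass m' σ' hne with ⟨h0, l, hl⟩ | ⟨hm1, hσ⟩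
    · exact ⟨h0, l, hl⟩
    · exfalso; apply hne; rw [hm1, hσ]; exact heps
  · exact heps
end

section
/- For every k with 1 ≤ k ≤ n, the differential ∂y'_k lies in the F-linear span of {w_1, …, w_{n−1}}; in particular no term of the form U·x'_l occurs in ∂y'_k. (This is the step 'b_{k,l} = 0' in the proof of Lemma 4.3 of the paper.) -/
theorem statement_3 (n : ℕ) (hn : 2 ≤ n)
    (d : Cinf n →ₗ[ZMod 2] Cinf n)
    -- (i) ∂ ∘ ∂ = 0
    (hdd : ∀ v, d (d v) = 0)
    -- F[U,U⁻¹]-linearity: ∂ commutes with multiplication by U (the shift (m,σ) ↦ (m+1,σ))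
    (hU : ∀ (m : ℤ) (σ : SGen n) (m' : ℤ) (σ' : SGen n),
      d (gen n m σ) (m', σ') = d (gen n (m + 1) σ) (m' + 1, σ'))
    -- (ii) ∂ is homogeneous of Maslov degree −1
    (hM : ∀ (m : ℤ) (σ : SGen n) (m' : ℤ) (σ' : SGen n),
      d (gen n m σ) (m', σ') ≠ 0 → σ'.1.M - 2 * m' = σ.1.M - 2 * m - 1)
    -- (iii) ∂ strictly drops the bifiltration
    (hF : ∀ (m : ℤ) (σ : SGen n) (m' : ℤ) (σ' : SGen n),
      d (gen n m σ) (m', σ') ≠ 0 →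
        σ'.1.A1 - m' ≤ σ.1.A1 - m ∧ σ'.1.A2 - m' ≤ σ.1.A2 - m ∧
          ¬(σ'.1.A1 - m' = σ.1.A1 - m ∧ σ'.1.A2 - m' = σ.1.A2 - m))
    -- (iv) the vertical components of ∂ (equal algebraic filtration) are exactly ∂_V
    (hV : ∀ (σ : SGen n) (m' : ℤ) (σ' : SGen n),
      σ'.1.A1 - m' = σ.1.A1 →
        d (gen n 0 σ) (m', σ') = if σ.1.dV n = some σ'.1 ∧ m' = 0 then 1 else 0) :
    ∀ (k : ℕ) (h1 : 1 ≤ k) (h2 : k ≤ n),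
      (∀ (m' : ℤ) (σ' : SGen n), d (gen n 0 ⟨Gen.y' k, h1, h2⟩) (m', σ') ≠ 0 →
          m' = 0 ∧ ∃ l, σ'.1 = Gen.w l) ∧
        -- in particular no term U·x'_l occurs in ∂y'_k
        ∀ (l : ℕ) (hl1 : 2 ≤ l) (hl2 : l ≤ n),
          d (gen n 0 ⟨Gen.y' k, h1, h2⟩) (1, ⟨Gen.x' l, hl1, hl2⟩) = 0 := by
  intro k hk1 hk2
  have hs : ∀ q : ℤ × SGen n, (Finsupp.single q 1 : Cinf n) = gen n q.1 q.2 := by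
    intro q; rfl
  have expand : ∀ (u : Cinf n) (p : ℤ × SGen n),
      d u p = ∑ q ∈ u.support, u q * d (Finsupp.single q 1) p := by
    intro u p
    conv_lhs => rw [← Finsupp.sum_single u, Finsupp.sum]
    rw [map_sum, Finsupp.finset_sum_apply]
    refine Finset.sum_congr rfl fun q hq => ?_
    rw [← Finsupp.smul_single_one q (u q), map_smul, Finsupp.smul_apply, smul_eq_mul]
  have classify : ∀ (m' : ℤ) (σ' : SGen n),
      d (gen n 0 ⟨Gen.y' k, hk1, hk2⟩) (m', σ') ≠ 0 →
      (m' = 0 ∧ ∃ j, σ'.1 = Gen.w j) ∨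
      (m' = 1 ∧ ∃ j, σ'.1 = Gen.x' j ∧ j ≤ k) := by
    intro m' σ' hne
    have hm := hM 0 ⟨Gen.y' k, hk1, hk2⟩ m' σ' hne
    have hf := hF 0 ⟨Gen.y' k, hk1, hk2⟩ m' σ' hne
    obtain ⟨g, hg⟩ := σ'
    cases g with
    | x j =>
      exfalso
      simp only [Gen.M, Gen.A1, Gen.A2] at hm hf
      have h2j : 2 ≤ j := hg.1
      omega
    | x' j =>
      refine Or.inr ⟨?_, j, rfl, ?_⟩ <;>
        simp only [Gen.M, Gen.A1, Gen.A2] at hm hf <;> omega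
    | y j => exfalso; simp only [Gen.M] at hm; omega
    | y' j => exfalso; simp only [Gen.M] at hm; omega
    | z j => exfalso; simp only [Gen.M] at hm; omega
    | w j =>
      refine Or.inl ⟨?_, j, rfl⟩
      simp only [Gen.M] at hm; omega
  have step : ∀ (l : ℕ) (hl1 : 2 ≤ l) (hln : l ≤ n), l ≤ k →
      (∀ (j : ℕ) (hj1 : 2 ≤ j) (hjn : j ≤ n), l < j → j ≤ k →
        d (gen n 0 ⟨Gen.y' k, hk1, hk2⟩) (1, ⟨Gen.x' j, hj1, hjn⟩) = 0) →
      d (gen n 0 ⟨Gen.y' k, hk1, hk2⟩) (1, ⟨Gen.x' l, hl1, hln⟩) = 0 := by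
    intro l hl1 hln hlk IH
    have hYl : Gen.Valid n (Gen.y' l) := ⟨by omega, hln⟩
    have h0 : d (d (gen n 0 ⟨Gen.y' k, hk1, hk2⟩)) ((1 : ℤ), (⟨Gen.y' l, hYl⟩ : SGen n)) = 0 := by
      rw [hdd]; rfl
    rw [expand] at h0
    have hone : d (Finsupp.single ((1 : ℤ), (⟨Gen.x' l, hl1, hln⟩ : SGen n)) 1)
        ((1 : ℤ), (⟨Gen.y' l, hYl⟩ : SGen n)) = 1 := by
      have hu := hU 0 ⟨Gen.x' l, hl1, hln⟩ 0 ⟨Gen.y' l, hYl⟩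
      have hv := hV ⟨Gen.x' l, hl1, hln⟩ 0 ⟨Gen.y' l, hYl⟩ (by simp [Gen.A1])
      rw [if_pos ⟨by simp [Gen.dV], rfl⟩] at hv
      rw [hs]
      simpa using hu.symm.trans hv
    have hsum : (∑ q ∈ (d (gen n 0 ⟨Gen.y' k, hk1, hk2⟩)).support,
        (d (gen n 0 ⟨Gen.y' k, hk1, hk2⟩)) q * d (Finsupp.single q 1)
          ((1 : ℤ), (⟨Gen.y' l, hYl⟩ : SGen n)))
        = (d (gen n 0 ⟨Gen.y' k, hk1, hk2⟩)) ((1 : ℤ), (⟨Gen.x' l, hl1, hln⟩ : SGen n)) *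
          d (Finsupp.single ((1 : ℤ), (⟨Gen.x' l, hl1, hln⟩ : SGen n)) 1)
          ((1 : ℤ), (⟨Gen.y' l, hYl⟩ : SGen n)) := by
      apply Finset.sum_eq_single
      · rintro ⟨m'', σ''⟩ hq hne
        rw [Finsupp.mem_support_iff] at hq
        rcases classify m'' σ'' hq with ⟨hm0, j, hw⟩ | ⟨hm1, j, hx, hjk⟩
        · have hz : d (Finsupp.single ((m'', σ'')) 1)
              ((1 : ℤ), (⟨Gen.y' l, hYl⟩ : SGen n)) = 0 := by
            by_contra hc
            rw [hs] at hc
            have hf := hF m'' σ'' 1 ⟨Gen.y' l, hYl⟩ hc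
            rw [hw] at hf
            simp only [Gen.A1, Gen.A2] at hf
            omega
          rw [hz, mul_zero]
        · subst hm1
          have hj : Gen.Valid n (Gen.x' j) := hx ▸ σ''.2
          have hσ : σ'' = ⟨Gen.x' j, hj⟩ := Subtype.ext hx
          subst hσ
          rcases lt_trichotomy j l with hjl | hjl | hjl
          · have hz : d (Finsupp.single (((1 : ℤ), (⟨Gen.x' j, hj⟩ : SGen n))) 1)
                ((1 : ℤ), (⟨Gen.y' l, hYl⟩ : SGen n)) = 0 := by
              by_contra hc
              rw [hs] at hc
              have hu := hU 0 (⟨Gen.x' j, hj⟩ : SGen n) 0 ⟨Gen.y' l, hYl⟩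
              have hc0 : d (gen n 0 (⟨Gen.x' j, hj⟩ : SGen n))
                  ((0 : ℤ), (⟨Gen.y' l, hYl⟩ : SGen n)) ≠ 0 := by
                rw [hu]; simpa using hc
              have hf := hF 0 ⟨Gen.x' j, hj⟩ 0 ⟨Gen.y' l, hYl⟩ hc0
              simp only [Gen.A1, Gen.A2] at hf
              omega
            rw [hz, mul_zero]
          · exfalso
            apply hne
            subst hjl
            rfl
          · rw [IH j hj.1 hj.2 hjl hjk, zero_mul]
      · intro hns
        rw [Finsupp.notMem_support_iff] at hns
        rw [hns, zero_mul]
    rw [hsum, hone, mul_one] at h0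
    exact h0
  have key : ∀ (t l : ℕ) (hl1 : 2 ≤ l) (hln : l ≤ n), l ≤ k → k - l ≤ t →
      d (gen n 0 ⟨Gen.y' k, hk1, hk2⟩) (1, ⟨Gen.x' l, hl1, hln⟩) = 0 := by
    intro t
    induction t with
    | zero =>
      intro l hl1 hln hlk ht
      exact step l hl1 hln hlk (fun j hj1 hjn hlj hjk => by omega)
    | succ t ih =>
      intro l hl1 hln hlk ht
      exact step l hl1 hln hlk (fun j hj1 hjn hlj hjk =>
        ih j hj1 hjn hjk (by omega))
  have part1 : ∀ (m' : ℤ) (σ' : SGen n),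
      d (gen n 0 ⟨Gen.y' k, hk1, hk2⟩) (m', σ') ≠ 0 →
      m' = 0 ∧ ∃ l, σ'.1 = Gen.w l := by
    intro m' σ' hne
    rcases classify m' σ' hne with ⟨h0, j, hw⟩ | ⟨h1, j, hx, hjk⟩
    · exact ⟨h0, j, hw⟩
    · exfalso
      subst h1
      have hj : Gen.Valid n (Gen.x' j) := hx ▸ σ'.2
      have hσ : σ' = ⟨Gen.x' j, hj⟩ := Subtype.ext hx
      subst hσ
      exact hne (key k j hj.1 hj.2 hjk (by omega))
  refine ⟨part1, ?_⟩
  intro l hl1 hl2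
  by_contra hc
  obtain ⟨_, j, hj⟩ := part1 1 ⟨Gen.x' l, hl1, hl2⟩ hc
  simp at hj
end

section
/- Let a_i ∈ F denote the coefficient of w_i in ∂y'_1 (for 1 ≤ i ≤ n−1). Then the cycle y'_1 + Σ_{i=1}^{n−1} a_i y_i is not in the image of ∂, i.e., there is no ξ ∈ C∞ with ∂ξ = y'_1 + Σ_{i=1}^{n−1} a_i y_i; equivalently, the homology class [y_n] ∈ H(C∞, ∂) is nonzero. (This is the nontriviality assertion of Lemma 4.4 of the paper.) -/
/-! By the Maslov grading and the bifiltration, the only basis elements whose boundary can reach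
`y'_j` are `x'_k` with `k ≥ j` and, when `j = 1`, also `x_n` and `U⁻¹ w_k`; the arrows in equal
algebraic filtration are vertical, so `x'_j ↦ y'_j` and `x_n ↦ y'_1` have coefficient `1` and
`U⁻¹ w_k ↦ y'_1` has coefficient `0`. If `∂ξ` has no `y'_j`-component for `j ≥ 2`, a downward
induction on `j` shows that `ξ` has no `x'_j`-component, and then the `y'_1`-coefficient of `∂ξ`
is the `x_n`-coefficient of `ξ`. Filtration and grading also force the `y_n`-coefficient of `∂ξ`
to come from `x_n` alone, so it is the same coefficient. Neither `y'_1 + Σ aᵢ yᵢ` nor `y_n` has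
equal coefficients at `y'_1` and `y_n`, so neither is a boundary. -/

namespace Finsupp

theorem linearMap_apply_apply_eq_of_forall_ne {α β R : Type*} [Semiring R]
    (f : (α →₀ R) →ₗ[R] (β →₀ R)) (ξ : α →₀ R) (b : β) (a₀ : α)
    (h : ∀ a, ξ a ≠ 0 → a ≠ a₀ → f (single a 1) b = 0) :
    f ξ b = ξ a₀ * f (single a₀ 1) b := by
  conv_lhs => rw [← ξ.sum_single]
  rw [map_finsuppSum, sum_apply, sum_eq_single a₀]
  · rw [← smul_single_one, map_smul, smul_apply, smul_eq_mul]
  · intro a ha hne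
    rw [← smul_single_one, map_smul, smul_apply, h a ha hne, smul_zero]
  · simp

end Finsupp

theorem Gen.A1_eq_of_dV_eq_some {n : ℕ} {σ τ : Gen} (h : σ.dV n = some τ) : τ.A1 = σ.A1 := by
  cases σ <;> grind [Gen.dV, Gen.A1]

structure IsFilteredDifferential {n : ℕ} (d : Cinf n →ₗ[ZMod 2] Cinf n) : Prop where
  shift : ∀ (m : ℤ) (σ : SGen n) (m' : ℤ) (σ' : SGen n),
    d (gen n m σ) (m', σ') = d (gen n (m + 1) σ) (m' + 1, σ')
  maslov : ∀ (m : ℤ) (σ : SGen n) (m' : ℤ) (σ' : SGen n),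
    d (gen n m σ) (m', σ') ≠ 0 → σ'.1.M - 2 * m' = σ.1.M - 2 * m - 1
  filtration : ∀ (m : ℤ) (σ : SGen n) (m' : ℤ) (σ' : SGen n),
    d (gen n m σ) (m', σ') ≠ 0 →
      σ'.1.A1 - m' ≤ σ.1.A1 - m ∧ σ'.1.A2 - m' ≤ σ.1.A2 - m ∧
        ¬(σ'.1.A1 - m' = σ.1.A1 - m ∧ σ'.1.A2 - m' = σ.1.A2 - m)
  vertical : ∀ (σ : SGen n) (m' : ℤ) (σ' : SGen n),
    σ'.1.A1 - m' = σ.1.A1 →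
      d (gen n 0 σ) (m', σ') = if σ.1.dV n = some σ'.1 ∧ m' = 0 then 1 else 0

namespace IsFilteredDifferential

variable {n : ℕ} {d : Cinf n →ₗ[ZMod 2] Cinf n}

theorem apply_gen_eq_one_of_dV (hd : IsFilteredDifferential d) {σ τ : SGen n}
    (h : σ.1.dV n = some τ.1) : d (gen n 0 σ) (0, τ) = 1 := by
  rw [hd.vertical σ 0 τ (by rw [Gen.A1_eq_of_dV_eq_some h, sub_zero]), if_pos ⟨h, rfl⟩]

theorem eq_of_apply_y'_ne_zero (hd : IsFilteredDifferential d) {m : ℤ} {σ τ : SGen n} {j : ℕ}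
    (hτ : τ.1 = .y' j) (h : d (gen n m σ) (0, τ) ≠ 0) :
    m = 0 ∧ (σ.1 = .x n ∧ j = 1 ∨ ∃ k, j ≤ k ∧ σ.1 = .x' k) := by
  have hM := hd.maslov m σ 0 τ h
  have hF := hd.filtration m σ 0 τ h
  obtain ⟨τ, hτv⟩ := τ
  obtain ⟨σ, hσv⟩ := σ
  subst hτ
  cases σ with
  | x k =>
    simp only [Gen.M, Gen.A1, Gen.A2] at hM hF
    obtain rfl : m = 0 := by omega
    obtain rfl : j = 1 := by simp only [Gen.Valid] at hτv; omega
    by_cases hk : k = n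
    · exact ⟨rfl, .inl ⟨congrArg _ hk, rfl⟩⟩
    · rw [hd.vertical _ _ _ (by simp [Gen.A1])] at h
      simp [Gen.dV, hk] at h
  | x' k =>
    simp only [Gen.M, Gen.A1, Gen.A2] at hM hF
    exact ⟨by omega, .inr ⟨k, by omega, rfl⟩⟩
  | w k =>
    simp only [Gen.M, Gen.A1, Gen.A2] at hM hF
    obtain rfl : m = -1 := by omega
    obtain rfl : j = 1 := by simp only [Gen.Valid] at hτv; omega
    rw [hd.shift, neg_add_cancel, zero_add, hd.vertical _ _ _ (by simp [Gen.A1])] at h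
    simp [Gen.dV] at h
  | y k | y' k | z k => simp only [Gen.M] at hM; omega

theorem eq_of_apply_y_ne_zero (hd : IsFilteredDifferential d) (hn : 2 ≤ n) {m : ℤ}
    {σ τ : SGen n} (hτ : τ.1 = .y n) (h : d (gen n m σ) (0, τ) ≠ 0) : m = 0 ∧ σ.1 = .x n := by
  have hM := hd.maslov m σ 0 τ h
  have hF := hd.filtration m σ 0 τ h
  obtain ⟨τ, hτv⟩ := τ
  obtain ⟨σ, hσv⟩ := σ
  subst hτ
  cases σ with
  | x k =>
    simp only [Gen.M, Gen.A1, Gen.A2] at hM hF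
    simp only [Gen.Valid] at hσv
    exact ⟨by omega, by simp only [Gen.x.injEq]; omega⟩
  | x' k | w k => simp only [Gen.M, Gen.A1, Gen.A2] at hM hF; omega
  | y k | y' k | z k => simp only [Gen.M] at hM; omega

variable (ξ : Cinf n)

theorem coeff_x'_eq_zero (hd : IsFilteredDifferential d)
    (hy' : ∀ (τ : SGen n) (j : ℕ), 2 ≤ j → τ.1 = .y' j → d ξ (0, τ) = 0)
    (σ : SGen n) (j : ℕ) (hσ : σ.1 = .x' j) : ξ (0, σ) = 0 := by
  induction ht : n - j using Nat.strong_induction_on generalizing σ j with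
  | _ t ih =>
  obtain ⟨σ, hσv⟩ := σ
  subst hσ
  have hj : 2 ≤ j ∧ j ≤ n := hσv
  calc ξ (0, ⟨.x' j, hσv⟩)
      = ξ (0, ⟨.x' j, hσv⟩) * d (gen n 0 ⟨.x' j, hσv⟩) (0, ⟨.y' j, by omega, hj.2⟩) := by
        rw [apply_gen_eq_one_of_dV hd rfl, mul_one]
    _ = d ξ (0, ⟨.y' j, by omega, hj.2⟩) :=
        (Finsupp.linearMap_apply_apply_eq_of_forall_ne d ξ _ _ ?_).symm
    _ = 0 := hy' _ j hj.1 rfl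
  rintro ⟨m, σ'⟩ hξ hne
  by_contra h
  obtain ⟨rfl, ⟨-, rfl⟩ | ⟨k, hjk, hk⟩⟩ := hd.eq_of_apply_y'_ne_zero rfl h
  · omega
  · have hkj : k ≠ j := by
      rintro rfl
      exact hne (Prod.ext rfl (Subtype.ext hk))
    have hkn : k ≤ n := by have := σ'.2; simp only [hk, Gen.Valid] at this; omega
    exact hξ (ih (n - k) (by omega) σ' k hk rfl)

theorem apply_y'_one_eq_coeff_x (hd : IsFilteredDifferential d)
    (hy' : ∀ (τ : SGen n) (j : ℕ), 2 ≤ j → τ.1 = .y' j → d ξ (0, τ) = 0)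
    {σ τ : SGen n} (hσ : σ.1 = .x n) (hτ : τ.1 = .y' 1) : d ξ (0, τ) = ξ (0, σ) := by
  calc d ξ (0, τ) = ξ (0, σ) * d (gen n 0 σ) (0, τ) :=
        Finsupp.linearMap_apply_apply_eq_of_forall_ne d ξ _ _ ?_
    _ = ξ (0, σ) := by rw [apply_gen_eq_one_of_dV hd (by simp [hσ, hτ, Gen.dV]), mul_one]
  rintro ⟨m, σ'⟩ hξ hne
  by_contra h
  obtain ⟨rfl, ⟨hx, -⟩ | ⟨k, -, hk⟩⟩ := hd.eq_of_apply_y'_ne_zero hτ h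
  · exact hne (Prod.ext rfl (Subtype.ext (hx.trans hσ.symm)))
  · exact hξ (coeff_x'_eq_zero ξ hd hy' σ' k hk)

theorem apply_y_eq_coeff_x (hd : IsFilteredDifferential d) (hn : 2 ≤ n)
    {σ τ : SGen n} (hσ : σ.1 = .x n) (hτ : τ.1 = .y n) (hστ : d (gen n 0 σ) (0, τ) = 1) :
    d ξ (0, τ) = ξ (0, σ) := by
  calc d ξ (0, τ) = ξ (0, σ) * d (gen n 0 σ) (0, τ) :=
        Finsupp.linearMap_apply_apply_eq_of_forall_ne d ξ _ _ ?_
    _ = ξ (0, σ) := by rw [hστ, mul_one]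
  rintro ⟨m, σ'⟩ hξ hne
  by_contra h
  obtain ⟨rfl, hx⟩ := hd.eq_of_apply_y_ne_zero hn hτ h
  exact hne (Prod.ext rfl (Subtype.ext (hx.trans hσ.symm)))

end IsFilteredDifferential

theorem statement_5 (n : ℕ) (hn : 2 ≤ n)
    (d : Cinf n →ₗ[ZMod 2] Cinf n)
    -- F[U,U⁻¹]-linearity: ∂ commutes with multiplication by U (the shift (m,σ) ↦ (m+1,σ))
    (hU : ∀ (m : ℤ) (σ : SGen n) (m' : ℤ) (σ' : SGen n),
      d (gen n m σ) (m', σ') = d (gen n (m + 1) σ) (m' + 1, σ'))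
    -- (ii) ∂ is homogeneous of Maslov degree −1
    (hM : ∀ (m : ℤ) (σ : SGen n) (m' : ℤ) (σ' : SGen n),
      d (gen n m σ) (m', σ') ≠ 0 → σ'.1.M - 2 * m' = σ.1.M - 2 * m - 1)
    -- (iii) ∂ strictly drops the bifiltration
    (hF : ∀ (m : ℤ) (σ : SGen n) (m' : ℤ) (σ' : SGen n),
      d (gen n m σ) (m', σ') ≠ 0 →
        σ'.1.A1 - m' ≤ σ.1.A1 - m ∧ σ'.1.A2 - m' ≤ σ.1.A2 - m ∧
          ¬(σ'.1.A1 - m' = σ.1.A1 - m ∧ σ'.1.A2 - m' = σ.1.A2 - m))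
    -- (iv) the vertical components of ∂ (equal algebraic filtration) are exactly ∂_V
    (hV : ∀ (σ : SGen n) (m' : ℤ) (σ' : SGen n),
      σ'.1.A1 - m' = σ.1.A1 →
        d (gen n 0 σ) (m', σ') = if σ.1.dV n = some σ'.1 ∧ m' = 0 then 1 else 0)
    -- (v) the coefficient of y_n in ∂x_n equals 1
    (hEnd : d (gen n 0 ⟨Gen.x n, hn, le_rfl⟩) (0, ⟨Gen.y n, by omega, le_rfl⟩) = 1) :
    -- the cycle y'_1 + Σ a_i y_i is not a boundary; equivalently [y_n] ≠ 0 in H(C∞,∂)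
    (¬ ∃ ξ : Cinf n, d ξ =
        gen n 0 ⟨Gen.y' 1, le_rfl, by omega⟩ +
          ∑ i : Fin (n - 1),
        d (gen n 0 ⟨Gen.y' 1, le_rfl, by omega⟩)
            (0, ⟨Gen.w (i.1 + 1), by omega, by have := i.isLt; omega⟩) •
          gen n 0 ⟨Gen.y (i.1 + 1), by omega, by have := i.isLt; omega⟩) ∧
      ¬ ∃ ξ : Cinf n, d ξ = gen n 0 ⟨Gen.y n, by omega, le_rfl⟩ := by
  have hd : IsFilteredDifferential d := ⟨hU, hM, hF, hV⟩
  have key : ∀ ξ, (∀ (τ : SGen n) (j : ℕ), 2 ≤ j → τ.1 = .y' j → d ξ (0, τ) = 0) →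
      d ξ (0, ⟨.y' 1, le_rfl, by omega⟩) = d ξ (0, ⟨.y n, by omega, le_rfl⟩) := fun ξ hy' =>
    (hd.apply_y'_one_eq_coeff_x ξ hy' rfl rfl).trans (hd.apply_y_eq_coeff_x ξ hn rfl rfl hEnd).symm
  refine ⟨fun ⟨ξ, hξ⟩ => ?_, fun ⟨ξ, hξ⟩ => ?_⟩
  · have hne : ∀ i : Fin (n - 1), (i : ℕ) + 1 ≠ n := fun i => by omega
    have := key ξ fun τ j hj hτ => by
      simp [hξ, gen, Finsupp.single_apply, Subtype.ext_iff, hτ]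
      omega
    simp [hξ, gen, Subtype.ext_iff, hne] at this
  · have := key ξ fun τ j hj hτ => by simp [hξ, gen, Subtype.ext_iff, hτ]
    simp [hξ, gen, Subtype.ext_iff] at this
end

section
/- Let λ, b ∈ ℝ satisfy λ ≥ n − 1 and b < min(n, λ). If v ∈ C∞ is homogeneous of Maslov grading 0, satisfies ∂v = 0, and lies in the F-linear span of {U^m σ : m ∈ ℤ, σ ∈ S, A₂(σ) − m ≤ −λ·(A₁(σ) − m) + b}, then v = 0. (This is the vanishing of the grading-0 homology of the subcomplexes C_model(L) established in the proof of Theorem C of the paper, covering both the regime of slope < −n with y-intercept < n and the regime of slope between −n and −n+1 with x-intercept < 1.) -/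
theorem statement_7 (n : ℕ) (hn : 2 ≤ n)
    (d : Cinf n →ₗ[ZMod 2] Cinf n)
    -- (i) ∂ ∘ ∂ = 0
    (hdd : ∀ v, d (d v) = 0)
    -- F[U,U⁻¹]-linearity: ∂ commutes with multiplication by U (the shift (m,σ) ↦ (m+1,σ))
    (hU : ∀ (m : ℤ) (σ : SGen n) (m' : ℤ) (σ' : SGen n),
      d (gen n m σ) (m', σ') = d (gen n (m + 1) σ) (m' + 1, σ'))
    -- (ii) ∂ is homogeneous of Maslov degree −1
    (hM : ∀ (m : ℤ) (σ : SGen n) (m' : ℤ) (σ' : SGen n),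
      d (gen n m σ) (m', σ') ≠ 0 → σ'.1.M - 2 * m' = σ.1.M - 2 * m - 1)
    -- (iii) ∂ strictly drops the bifiltration
    (hF : ∀ (m : ℤ) (σ : SGen n) (m' : ℤ) (σ' : SGen n),
      d (gen n m σ) (m', σ') ≠ 0 →
        σ'.1.A1 - m' ≤ σ.1.A1 - m ∧ σ'.1.A2 - m' ≤ σ.1.A2 - m ∧
          ¬(σ'.1.A1 - m' = σ.1.A1 - m ∧ σ'.1.A2 - m' = σ.1.A2 - m))
    -- (iv) the vertical components of ∂ (equal algebraic filtration) are exactly ∂_V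
    (hV : ∀ (σ : SGen n) (m' : ℤ) (σ' : SGen n),
      σ'.1.A1 - m' = σ.1.A1 →
        d (gen n 0 σ) (m', σ') = if σ.1.dV n = some σ'.1 ∧ m' = 0 then 1 else 0)
    (lam b : ℝ) (hlam : (n : ℝ) - 1 ≤ lam) (hb : b < min (n : ℝ) lam)
    (v : Cinf n)
    -- v is homogeneous of Maslov grading 0
    (hv0 : ∀ (m : ℤ) (σ : SGen n), v (m, σ) ≠ 0 → σ.1.M - 2 * m = 0)
    -- v is a cycle
    (hvc : d v = 0)
    -- v lies in the span of the basis elements on or below the line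
    (hvs : v ∈ Submodule.span (ZMod 2)
        {u : Cinf n | ∃ (m : ℤ) (σ : SGen n), ((σ.1.A2 - m : ℤ) : ℝ) ≤ -lam * ((σ.1.A1 - m : ℤ) : ℝ) + b ∧ u = gen n m σ}) :
    v = 0 := by
  -- support lies in the half-plane
  have hmem : v ∈ Finsupp.supported (ZMod 2) (ZMod 2)
      {q : ℤ × SGen n | ((q.2.1.A2 - q.1 : ℤ) : ℝ) ≤ -lam * ((q.2.1.A1 - q.1 : ℤ) : ℝ) + b} := by
    refine Submodule.span_le.mpr ?_ hvs
    rintro u ⟨m, σ, hline, rfl⟩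
    rw [SetLike.mem_coe, Finsupp.mem_supported, gen,
      Finsupp.support_single_ne_zero _ one_ne_zero]
    intro q hq
    simp only [Finset.coe_singleton, Set.mem_singleton_iff] at hq
    subst hq
    exact hline
  rw [Finsupp.mem_supported] at hmem
  have hlam1 : (1 : ℝ) ≤ lam := by
    have h2 : (2 : ℝ) ≤ (n : ℝ) := by exact_mod_cast hn
    linarith
  have hbn : b < (n : ℝ) := lt_of_lt_of_le hb (min_le_left _ _)
  have hblam : b < lam := lt_of_lt_of_le hb (min_le_right _ _)
  -- classification of the support
  have hclass : ∀ p : ℤ × SGen n, v p ≠ 0 →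
      ∃ (j : ℕ) (hj : Gen.Valid n (Gen.y j)), 1 ≤ j ∧ j < n ∧
        p = (0, ⟨Gen.y j, hj⟩) := by
    rintro ⟨m, σ⟩ hp
    have hline : ((σ.1.A2 - m : ℤ) : ℝ) ≤ -lam * ((σ.1.A1 - m : ℤ) : ℝ) + b :=
      hmem (Finsupp.mem_support_iff.mpr hp)
    have hMp := hv0 m σ hp
    obtain ⟨g, hg⟩ := σ
    cases g with
    | x k => simp only [Gen.M] at hMp; omega
    | x' k => simp only [Gen.M] at hMp; omega
    | w k => simp only [Gen.M] at hMp; omega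
    | y k =>
      have hm0 : m = 0 := by simp only [Gen.M] at hMp; omega
      subst hm0
      simp only [Gen.A1, Gen.A2, sub_zero] at hline
      push_cast at hline
      have hkb : (k : ℝ) ≤ b := by linarith
      have hkn : (k : ℝ) < (n : ℝ) := lt_of_le_of_lt hkb hbn
      have hkn' : k < n := by exact_mod_cast hkn
      exact ⟨k, hg, hg.1, hkn', rfl⟩
    | y' k =>
      have hm0 : m = 0 := by simp only [Gen.M] at hMp; omega
      subst hm0
      simp only [Gen.A1, Gen.A2, sub_zero] at hline
      push_cast at hline
      have hk1 : (1 : ℝ) ≤ (k : ℝ) := by exact_mod_cast hg.1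
      nlinarith
    | z k =>
      have hm0 : m = 0 := by simp only [Gen.M] at hMp; omega
      subst hm0
      simp only [Gen.A1, Gen.A2, sub_zero] at hline
      push_cast at hline
      linarith
  -- conclude
  ext p
  rw [Finsupp.coe_zero, Pi.zero_apply]
  by_contra hp
  obtain ⟨j, hj, hj1, hjn, rfl⟩ := hclass p hp
  have hwv : Gen.Valid n (Gen.w j) := ⟨hj1, by omega⟩
  -- evaluate the cycle condition at (0, w_j)
  have hvsum : v = ∑ q ∈ v.support, v q • gen n q.1 q.2 := by
    conv_lhs => rw [← Finsupp.sum_single v]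
    rw [Finsupp.sum]
    refine Finset.sum_congr rfl fun q _ => ?_
    rw [gen, Finsupp.smul_single', mul_one]
  have hdv : (d v) (0, (⟨Gen.w j, hwv⟩ : SGen n)) = v (0, ⟨Gen.y j, hj⟩) := by
    conv_lhs => rw [hvsum]
    rw [map_sum, Finsupp.finset_sum_apply]
    rw [Finset.sum_eq_single ((0 : ℤ), (⟨Gen.y j, hj⟩ : SGen n))]
    · have hA : (⟨Gen.w j, hwv⟩ : SGen n).1.A1 - (0 : ℤ) =
          (⟨Gen.y j, hj⟩ : SGen n).1.A1 := by simp [Gen.A1]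
      have hVv := hV ⟨Gen.y j, hj⟩ 0 ⟨Gen.w j, hwv⟩ hA
      have hdV : Gen.dV n (Gen.y j) = some (Gen.w j) := by
        simp only [Gen.dV]
        rw [if_neg (by omega)]
      rw [map_smul, Finsupp.smul_apply, hVv, hdV]
      rw [if_pos ⟨rfl, rfl⟩, smul_eq_mul, mul_one]
    · rintro ⟨m', σ'⟩ hq hne
      have hq' : v (m', σ') ≠ 0 := Finsupp.mem_support_iff.mp hq
      obtain ⟨i, hi, hi1, hin, heq⟩ := hclass _ hq'
      rw [heq]
      rw [heq] at hne
      have hij : i ≠ j := by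
        intro h; subst h; exact hne rfl
      have hA : (⟨Gen.w j, hwv⟩ : SGen n).1.A1 - (0 : ℤ) =
          (⟨Gen.y i, hi⟩ : SGen n).1.A1 := by simp [Gen.A1]
      have hVv := hV ⟨Gen.y i, hi⟩ 0 ⟨Gen.w j, hwv⟩ hA
      have hdV : Gen.dV n (Gen.y i) = some (Gen.w i) := by
        simp only [Gen.dV]
        rw [if_neg (by omega)]
      rw [map_smul, Finsupp.smul_apply, hVv, hdV]
      rw [if_neg (by rintro ⟨h1, -⟩; exact hij (by injection h1 with h2; injection h2)), smul_zero]
    · intro h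
      exact absurd (Finsupp.mem_support_iff.mpr hp) h
  rw [hvc] at hdv
  simp only [Finsupp.coe_zero, Pi.zero_apply] at hdv
  exact hp hdv.symm
end
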